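/- arXiv:1205.6107 — 7 statements merged into one kernel-verified Lean document; each statement's English description precedes it below -/
import Mathlib

section
/- For all real t ≠ 0, cosh t ≤ (sinh t / t)^3. -/
/-!
Multiplying out, the inequality says `h(x) = sinh³ x - x³ cosh x ≥ 0` for `x > 0`. Since `h 0 = 0`
it suffices that `h' x = 3 cosh x (sinh² x - x²) - x³ sinh x ≥ 0`, and this follows from the two
elementary bounds `sinh x ≥ x + x³/6` (so `sinh² x - x² ≥ x⁴/3`) and `sinh x ≤ x cosh x`.
-/

open Real Set

lemma monotoneOn_Ici_of_hasDerivAt_nonneg {f f' : ℝ → ℝ} {a : ℝ}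
    (hf : ∀ x, HasDerivAt f (f' x) x) (hf' : ∀ x, a < x → 0 ≤ f' x) :
    MonotoneOn f (Ici a) :=
  monotoneOn_of_hasDerivWithinAt_nonneg (convex_Ici a)
    (fun x _ ↦ (hf x).continuousAt.continuousWithinAt)
    (fun x _ ↦ (hf x).hasDerivWithinAt)
    (fun x hx ↦ hf' x (by rwa [interior_Ici] at hx))

namespace Real

lemma self_add_pow_three_div_six_le_sinh {x : ℝ} (hx : 0 ≤ x) : x + x ^ 3 / 6 ≤ sinh x := by
  have := sum_le_hasSum (Finset.range 2) (fun n _ ↦ by positivity) (hasSum_sinh x)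
  norm_num [Finset.sum_range_succ, Nat.factorial] at this
  exact this

lemma sinh_le_mul_cosh {x : ℝ} (hx : 0 ≤ x) : sinh x ≤ x * cosh x := by
  have hderiv (y : ℝ) : HasDerivAt (fun y ↦ y * cosh y - sinh y) (y * sinh y) y := by
    refine ((hasDerivAt_id' y).fun_mul (hasDerivAt_cosh y)).fun_sub (hasDerivAt_sinh y)
      |>.congr_deriv ?_
    ring
  have := monotoneOn_Ici_of_hasDerivAt_nonneg hderiv
    (fun y hy ↦ mul_nonneg hy.le (sinh_nonneg_iff.2 hy.le)) self_mem_Ici hx hx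
  simp only [zero_mul, sinh_zero, sub_zero] at this
  linarith

lemma pow_three_mul_cosh_le_sinh_pow_three {x : ℝ} (hx : 0 ≤ x) :
    x ^ 3 * cosh x ≤ sinh x ^ 3 := by
  have hderiv (y : ℝ) : HasDerivAt (fun y ↦ sinh y ^ 3 - y ^ 3 * cosh y)
      (3 * cosh y * (sinh y ^ 2 - y ^ 2) - y ^ 3 * sinh y) y := by
    refine ((hasDerivAt_sinh y).fun_pow 3).fun_sub
      ((hasDerivAt_pow 3 y).fun_mul (hasDerivAt_cosh y)) |>.congr_deriv ?_
    push_cast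
    ring
  have hderiv_nonneg (y : ℝ) (hy : 0 < y) :
      0 ≤ 3 * cosh y * (sinh y ^ 2 - y ^ 2) - y ^ 3 * sinh y := by
    have hsinh := self_add_pow_three_div_six_le_sinh hy.le
    have hy3 : 0 ≤ y ^ 3 := by positivity
    have hsq : y ^ 4 / 3 ≤ sinh y ^ 2 - y ^ 2 := by
      have := mul_le_mul (a := y ^ 3 / 6) (b := sinh y - y) (c := 2 * y) (d := sinh y + y)
        (by linarith) (by linarith) (by positivity) (by linarith)
      nlinarith
    nlinarith [mul_le_mul_of_nonneg_left hsq (by positivity : (0 : ℝ) ≤ 3 * cosh y),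
      mul_le_mul_of_nonneg_left (sinh_le_mul_cosh hy.le) hy3]
  have := monotoneOn_Ici_of_hasDerivAt_nonneg hderiv hderiv_nonneg self_mem_Ici hx hx
  simp only [sinh_zero, ne_eq, OfNat.ofNat_ne_zero, not_false_eq_true, zero_pow, cosh_zero,
    mul_one, sub_self, sub_nonneg] at this
  exact this

end Real

theorem lazarevic_inequality (t : ℝ) (ht : t ≠ 0) :
    Real.cosh t ≤ (Real.sinh t / t) ^ 3 := by
  wlog hpos : 0 < t generalizing t
  · simpa [neg_div_neg_eq] using this (-t) (neg_ne_zero.2 ht) (by grind)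
  rw [div_pow, le_div_iff₀ (by positivity), mul_comm]
  exact pow_three_mul_cosh_le_sinh_pow_three hpos.le
end

section
/- Let N be a positive integer, 1 ≤ k ≤ 2N-1, λ_k = 2 sin²(kπ/(4N)), and let γ_k ≥ 0 be defined by cosh γ_k = (1 + √(25 + 8λ_k))/4. Then λ_k/6 ≤ cosh γ_k − 3/2 ≤ λ_k/5. -/
/-! Writing `cosh γ - 3/2 = (√(25 + 8λ) - 5) / 4`, both bounds are linear bounds on the concave
function `λ ↦ √(25 + 8λ)`: its tangent line `5 + 4λ/5` at `λ = 0` lies above it everywhere, and its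
chord `5 + 2λ/3` between `λ = 0` and `λ = 3` lies below it on `[0, 3]`, which contains
`λ_k = 2 sin² (kπ/(4N)) ∈ [0, 2]`. -/

open Real

lemma sqrt_twentyfive_add_le {x : ℝ} (hx : 0 ≤ x) : √(25 + 8 * x) ≤ 5 + 4 * x / 5 :=
  sqrt_le_iff.mpr ⟨by linarith, by nlinarith⟩

lemma le_sqrt_twentyfive_add {x : ℝ} (hx0 : 0 ≤ x) (hx3 : x ≤ 3) :
    5 + 2 * x / 3 ≤ √(25 + 8 * x) :=
  (le_sqrt (by linarith) (by linarith)).mpr (by nlinarith)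

theorem cosh_gamma_bounds_general (N k : ℕ)
    (lam γ : ℝ) (hlam : lam = 2 * Real.sin (k * Real.pi / (4 * N)) ^ 2)
    (hcosh : Real.cosh γ = (1 + Real.sqrt (25 + 8 * lam)) / 4) :
    lam / 6 ≤ Real.cosh γ - 3 / 2 ∧ Real.cosh γ - 3 / 2 ≤ lam / 5 := by
  have hlam0 : 0 ≤ lam := hlam ▸ by positivity
  have hlam2 : lam ≤ 2 := hlam ▸ by nlinarith [sin_sq_le_one (k * π / (4 * N))]
  have hlow := le_sqrt_twentyfive_add hlam0 (by linarith)
  have hup := sqrt_twentyfive_add_le hlam0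
  constructor <;> rw [hcosh] <;> linarith

theorem cosh_gamma_bounds (N k : ℕ) (hN : 0 < N) (hk1 : 1 ≤ k) (hk2 : k ≤ 2 * N - 1)
    (lam γ : ℝ) (hlam : lam = 2 * Real.sin (k * Real.pi / (4 * N)) ^ 2)
    (hγ : 0 ≤ γ) (hcosh : Real.cosh γ = (1 + Real.sqrt (25 + 8 * lam)) / 4) :
    lam / 6 ≤ Real.cosh γ - 3 / 2 ∧ Real.cosh γ - 3 / 2 ≤ lam / 5 :=
  cosh_gamma_bounds_general N k lam γ hlam hcosh
end

section
/- Let N be a positive integer, 1 ≤ k ≤ 2N-1, λ_k = 2 sin²(kπ/(4N)), and let δ_k ≥ 0 satisfy cosh δ_k = (−1 + √(25 + 8λ_k))/4. Then sinh δ_k ≥ √(λ_k/3). -/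
/-! Writing `c = cosh δ`, the defining relation says `√(25 + 8λ) = 4c + 1`, so squaring gives
`λ = (c - 1)(2c + 3)`. Then `3 sinh² δ - λ = 3(c² - 1) - λ = c(c - 1) ≥ 0` because `c ≥ 1`. -/

open Real

theorem eq_sub_one_mul_of_eq_sqrt {c lam : ℝ} (hc : -1 / 4 < c)
    (h : c = (-1 + √(25 + 8 * lam)) / 4) : lam = (c - 1) * (2 * c + 3) := by
  have hsqrt : √(25 + 8 * lam) = 4 * c + 1 := by linarith
  have hpos : 0 < 25 + 8 * lam := Real.sqrt_pos.1 (by linarith)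
  have hsq := Real.sq_sqrt hpos.le
  rw [hsqrt] at hsq
  linear_combination -hsq / 8

theorem three_mul_sinh_sq_sub_eq {x lam : ℝ} (h : lam = (cosh x - 1) * (2 * cosh x + 3)) :
    3 * sinh x ^ 2 - lam = cosh x * (cosh x - 1) := by
  rw [h, sinh_sq]
  ring

theorem div_three_le_sinh_sq {x lam : ℝ} (h : lam = (cosh x - 1) * (2 * cosh x + 3)) :
    lam / 3 ≤ sinh x ^ 2 := by
  have hprod : 0 ≤ cosh x * (cosh x - 1) :=
    mul_nonneg (cosh_pos x).le (sub_nonneg.2 (one_le_cosh x))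
  linarith [three_mul_sinh_sq_sub_eq h]

theorem sinh_delta_lower_bound_general
    (lam δ : ℝ)
    (hδ : 0 ≤ δ) (hcosh : Real.cosh δ = (-1 + Real.sqrt (25 + 8 * lam)) / 4) :
    Real.sinh δ ≥ Real.sqrt (lam / 3) := by
  have hlam := eq_sub_one_mul_of_eq_sqrt (by linarith [one_le_cosh δ]) hcosh
  exact Real.sqrt_le_iff.2 ⟨sinh_nonneg_iff.2 hδ, div_three_le_sinh_sq hlam⟩

theorem sinh_delta_lower_bound (N k : ℕ) (hN : 0 < N) (hk1 : 1 ≤ k) (hk2 : k ≤ 2 * N - 1)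
    (lam δ : ℝ) (hlam : lam = 2 * Real.sin (k * Real.pi / (4 * N)) ^ 2)
    (hδ : 0 ≤ δ) (hcosh : Real.cosh δ = (-1 + Real.sqrt (25 + 8 * lam)) / 4) :
    Real.sinh δ ≥ Real.sqrt (lam / 3) :=
  sinh_delta_lower_bound_general lam δ hδ hcosh
end

section
/- Let N be a positive integer, 1 ≤ k ≤ 2N-1, λ_k = 2 sin²(kπ/(4N)), and α_k ≥ 0 with cosh α_k = 1 + λ_k/5. Then exp(−α_k) ≤ exp(−k/(2√5 N)). -/
/-! Put `t = k / (2N) ∈ [0, 1]`, so that the angle is `t π / 2` and Jordan's inequality gives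
`sin (t π / 2) ≥ t`. Hence `cosh α = 1 + (2/5) sin² ≥ 1 + t² / 5 ≥ cosh (t / √5)`, using
`cosh x ≤ exp (x² / 2) ≤ 1 + x²` for `|x| ≤ 1`, and `α ≥ t / √5` because `cosh` is increasing
on `[0, ∞)`. -/

open Real

lemma exp_le_one_add_two_mul {y : ℝ} (hy0 : 0 ≤ y) (hy : y ≤ 1 / 2) : exp y ≤ 1 + 2 * y := by
  have hpos : 0 < 1 - y := by linarith
  calc exp y ≤ 1 / (1 - y) := exp_bound_div_one_sub_of_interval hy0 (by linarith)
    _ ≤ 1 + 2 * y := by rw [div_le_iff₀ hpos]; nlinarith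

lemma cosh_le_one_add_sq {x : ℝ} (hx : |x| ≤ 1) : cosh x ≤ 1 + x ^ 2 := by
  have hx2 : x ^ 2 ≤ 1 := by simpa using sq_le_sq.2 (hx.trans_eq (abs_one).symm)
  calc cosh x ≤ exp (x ^ 2 / 2) := cosh_le_exp_half_sq x
    _ ≤ 1 + 2 * (x ^ 2 / 2) := exp_le_one_add_two_mul (by positivity) (by linarith)
    _ = 1 + x ^ 2 := by ring

lemma le_sin_mul_pi_div_two {t : ℝ} (ht0 : 0 ≤ t) (ht1 : t ≤ 1) : t ≤ sin (t * (π / 2)) := by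
  have h := mul_le_sin (mul_nonneg ht0 pi_div_two_pos.le)
    (mul_le_of_le_one_left pi_div_two_pos.le ht1)
  rwa [mul_comm t, ← mul_assoc, div_mul_div_cancel₀ pi_ne_zero, div_self two_ne_zero, one_mul,
    mul_comm] at h

theorem exp_neg_alpha_bound_general (N k : ℕ) (hk2 : k ≤ 2 * N - 1)
    (lam α : ℝ) (hlam : lam = 2 * Real.sin (k * Real.pi / (4 * N)) ^ 2)
    (hα : 0 ≤ α) (hcosh : Real.cosh α = 1 + lam / 5) :
    Real.exp (-α) ≤ Real.exp (-(k : ℝ) / (2 * Real.sqrt 5 * N)) := by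
  set t : ℝ := k / (2 * N)
  have ht0 : 0 ≤ t := by positivity
  have ht1 : t ≤ 1 := div_le_one_of_le₀ (by exact_mod_cast (by omega : k ≤ 2 * N)) (by positivity)
  have hs5 : 1 ≤ √5 := one_le_sqrt.2 (by norm_num)
  have hct : (k : ℝ) / (2 * √5 * N) = t / √5 := by ring
  have hθt : (k : ℝ) * π / (4 * N) = t * (π / 2) := by ring
  have hc : |t / √5| ≤ 1 := by
    rw [abs_of_nonneg (by positivity)]
    exact (div_le_self ht0 hs5).trans ht1
  have hcosh_le : cosh (t / √5) ≤ cosh α := calc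
    cosh (t / √5) ≤ 1 + (t / √5) ^ 2 := cosh_le_one_add_sq hc
    _ ≤ 1 + 2 * t ^ 2 / 5 := by rw [div_pow, sq_sqrt (by norm_num)]; nlinarith
    _ ≤ 1 + 2 * sin (t * (π / 2)) ^ 2 / 5 := by gcongr; exact le_sin_mul_pi_div_two ht0 ht1
    _ = cosh α := by rw [hcosh, hlam, hθt]
  have hcα : t / √5 ≤ α := by
    simpa [abs_of_nonneg hα, abs_of_nonneg (by positivity : 0 ≤ t / √5)]
      using cosh_le_cosh.1 hcosh_le
  rw [exp_le_exp, neg_div, hct]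
  exact neg_le_neg hcα

theorem exp_neg_alpha_bound (N k : ℕ) (hN : 0 < N) (hk1 : 1 ≤ k) (hk2 : k ≤ 2 * N - 1)
    (lam α : ℝ) (hlam : lam = 2 * Real.sin (k * Real.pi / (4 * N)) ^ 2)
    (hα : 0 ≤ α) (hcosh : Real.cosh α = 1 + lam / 5) :
    Real.exp (-α) ≤ Real.exp (-(k : ℝ) / (2 * Real.sqrt 5 * N)) :=
  exp_neg_alpha_bound_general N k hk2 lam α hlam hα hcosh
end

section
/- Let M ≥ 2 be an integer, α > 0, and ρ = sinh((M−1)α) / (5 sinh(Mα) + sinh((M−1)α)). Then 0 < 1 − 6ρ ≤ (5/6)(cosh α − 1 + 1/(M−1) + sinh α). -/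
/-!
Put `x = (M - 1) α` and `k = M - 1`. Then `1 - 6ρ = 5 (sinh (x + α) - sinh x) / (5 sinh (x + α) + sinh x)`,
which is positive since `sinh` is increasing, and at most `(5/6) (sinh (x + α) - sinh x) / sinh x`.
By the addition formula this ratio is `cosh α - 1 + coth x · sinh α`, and
`coth x · sinh α ≤ sinh α + sinh α / sinh x ≤ sinh α + 1 / k`, using `cosh x ≤ sinh x + 1`
and the superadditivity `k sinh α ≤ sinh (k α)`.
-/

open Real

namespace Real

theorem nat_mul_sinh_le_sinh_nat_mul (n : ℕ) {α : ℝ} (hα : 0 ≤ α) :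
    n * sinh α ≤ sinh (n * α) := by
  induction n with
  | zero => simp
  | succ n ih =>
    have hsα : 0 ≤ sinh α := sinh_nonneg_iff.2 hα
    have hsn : 0 ≤ sinh (n * α) := sinh_nonneg_iff.2 (by positivity)
    calc ((n + 1 : ℕ) : ℝ) * sinh α = n * sinh α + sinh α := by push_cast; ring
      _ ≤ sinh (n * α) * cosh α + cosh (n * α) * sinh α :=
        add_le_add (ih.trans (le_mul_of_one_le_right hsn (one_le_cosh α)))
          (le_mul_of_one_le_left hsα (one_le_cosh _))
      _ = sinh ((n + 1 : ℕ) * α) := by rw [← sinh_add]; push_cast; ring_nf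

theorem cosh_le_sinh_add_one {x : ℝ} (hx : 0 ≤ x) : cosh x ≤ sinh x + 1 := by
  have : exp (-x) ≤ 1 := exp_le_one_iff.2 (neg_nonpos.2 hx)
  linarith [cosh_sub_sinh x]

theorem sinh_add_sub_sinh_div_sinh_nat_mul_le {k : ℕ} (hk : 0 < k) {α : ℝ} (hα : 0 < α) :
    (sinh (k * α + α) - sinh (k * α)) / sinh (k * α) ≤ cosh α - 1 + 1 / k + sinh α := by
  have hkℝ : (0 : ℝ) < k := by exact_mod_cast hk
  have hx : 0 < sinh (k * α) := sinh_pos_iff.2 (by positivity)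
  have hsα : 0 < sinh α := sinh_pos_iff.2 hα
  have hcosh : cosh (k * α) ≤ sinh (k * α) + 1 := cosh_le_sinh_add_one (by positivity)
  have hsuper : sinh α ≤ sinh (k * α) * (1 / k) := by
    rw [mul_one_div, le_div_iff₀ hkℝ, mul_comm]
    exact nat_mul_sinh_le_sinh_nat_mul k hα.le
  rw [div_le_iff₀ hx, sinh_add]
  nlinarith

end Real

theorem one_sub_six_mul_div_bounds {a b : ℝ} (ha : 0 < a) (hab : a < b) :
    0 < 1 - 6 * (a / (5 * b + a)) ∧ 1 - 6 * (a / (5 * b + a)) ≤ 5 / 6 * ((b - a) / a) := by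
  have hden : 0 < 5 * b + a := by linarith
  have heq : 1 - 6 * (a / (5 * b + a)) = 5 * (b - a) / (5 * b + a) := by
    field_simp
    ring
  rw [heq]
  refine ⟨div_pos (by linarith) hden, ?_⟩
  rw [div_le_iff₀ hden]
  field_simp
  nlinarith

theorem rho_estimate (M : ℕ) (hM : 2 ≤ M) (α : ℝ) (hα : 0 < α)
    (ρ : ℝ)
    (hρ : ρ = Real.sinh ((M - 1 : ℝ) * α) / (5 * Real.sinh (M * α) + Real.sinh ((M - 1 : ℝ) * α))) :
    0 < 1 - 6 * ρ ∧
    1 - 6 * ρ ≤ (5 / 6) * (Real.cosh α - 1 + 1 / ((M : ℝ) - 1) + Real.sinh α) := by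
  obtain ⟨k, rfl⟩ : ∃ k, M = k + 1 := ⟨M - 1, by omega⟩
  have hk : 0 < k := by omega
  have hcast : ((k + 1 : ℕ) : ℝ) - 1 = k := by push_cast; ring
  have hMα : ((k + 1 : ℕ) : ℝ) * α = k * α + α := by push_cast; ring
  rw [hcast, hMα] at hρ
  rw [hcast, hρ]
  have hx : 0 < sinh (k * α) := sinh_pos_iff.2 (by positivity)
  have hmono : sinh (k * α) < sinh (k * α + α) := sinh_lt_sinh.2 (by linarith)
  obtain ⟨hpos, hle⟩ := one_sub_six_mul_div_bounds hx hmono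
  refine ⟨hpos, hle.trans ?_⟩
  gcongr
  exact sinh_add_sub_sinh_div_sinh_nat_mul_le hk hα
end

section
/- For every positive integer N, every ϱ ∈ (0,1), and x = π/(2N): ∑_{k=1}^{N} ϱ^{2k−1} sin((2k−1)x) ≤ (2ϱ/(1−ϱ)²) sin x. -/
/-! Since `0 ≤ x ≤ π`, the elementary bound `|sin (n x)| ≤ n sin x` gives
`ϱ^(2k-1) sin ((2k-1) x) ≤ (2k-1) ϱ^(2k-1) sin x`. Summing over the odd exponents only
is dominated by the whole series `∑ n ϱ^n = ϱ / (1 - ϱ)²`, which is half the claimed constant. -/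

open Real Finset

lemma Real.abs_sin_nat_mul_le (θ : ℝ) (n : ℕ) : |sin (n * θ)| ≤ n * |sin θ| := by
  induction n with
  | zero => simp
  | succ n ih =>
    calc |sin ((n + 1 : ℕ) * θ)| = |sin (n * θ) * cos θ + cos (n * θ) * sin θ| := by
          push_cast; rw [add_mul, one_mul, sin_add]
      _ ≤ |sin (n * θ)| * |cos θ| + |cos (n * θ)| * |sin θ| := by
          simpa only [abs_mul] using abs_add_le (sin (n * θ) * cos θ) (cos (n * θ) * sin θ)
      _ ≤ n * |sin θ| * 1 + 1 * |sin θ| := by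
          gcongr
          exacts [abs_cos_le_one θ, abs_cos_le_one _]
      _ = (n + 1 : ℕ) * |sin θ| := by push_cast; ring

lemma Real.sin_pi_div_natCast_nonneg (n : ℕ) : 0 ≤ sin (π / n) := by
  rcases n.eq_zero_or_pos with rfl | hn
  · simp
  · exact sin_nonneg_of_nonneg_of_le_pi (by positivity)
      (div_le_self pi_nonneg (by exact_mod_cast hn))

lemma sum_odd_mul_pow_le {r : ℝ} (hr0 : 0 ≤ r) (hr1 : r < 1) (s : Finset ℕ) :
    ∑ k ∈ s, ((2 * k - 1 : ℕ) : ℝ) * r ^ (2 * k - 1) ≤ r / (1 - r) ^ 2 := by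
  have hr : ‖r‖ < 1 := by rwa [norm_of_nonneg hr0]
  have hodd : Function.Injective fun k : ℕ => 2 * k - 1 := fun a b h => by
    simp only at h; omega
  rw [← sum_image (f := fun n : ℕ => (n : ℝ) * r ^ n) fun a _ b _ h => hodd h,
    ← tsum_coe_mul_geometric_of_norm_lt_one hr]
  exact Summable.sum_le_tsum _ (fun n _ => by positivity)
    (by simpa using summable_pow_mul_geometric_of_norm_lt_one 1 hr)

theorem trig_sum_bound_general (N : ℕ) (ϱ : ℝ) (hϱ0 : 0 < ϱ) (hϱ1 : ϱ < 1)
    (x : ℝ) (hx : x = Real.pi / (2 * N)) :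
    ∑ k ∈ Finset.Icc 1 N, ϱ ^ (2 * k - 1) * Real.sin ((2 * (k : ℝ) - 1) * x) ≤
      (2 * ϱ / (1 - ϱ) ^ 2) * Real.sin x := by
  have hsin : 0 ≤ sin x := by
    simpa [hx] using sin_pi_div_natCast_nonneg (2 * N)
  have hterm (k : ℕ) (hk : k ∈ Icc 1 N) : ϱ ^ (2 * k - 1) * sin ((2 * (k : ℝ) - 1) * x) ≤
      ((2 * k - 1 : ℕ) : ℝ) * ϱ ^ (2 * k - 1) * sin x := by
    have hcast : 2 * (k : ℝ) - 1 = ((2 * k - 1 : ℕ) : ℝ) := by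
      rw [Nat.cast_sub (by grind)]; push_cast; ring
    have hbound := (le_abs_self _).trans (abs_sin_nat_mul_le x (2 * k - 1))
    rw [abs_of_nonneg hsin] at hbound
    rw [hcast, mul_assoc, mul_left_comm]
    exact mul_le_mul_of_nonneg_left hbound (by positivity)
  calc _ ≤ ∑ k ∈ Icc 1 N, ((2 * k - 1 : ℕ) : ℝ) * ϱ ^ (2 * k - 1) * sin x := sum_le_sum hterm
    _ = (∑ k ∈ Icc 1 N, ((2 * k - 1 : ℕ) : ℝ) * ϱ ^ (2 * k - 1)) * sin x := (sum_mul ..).symm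
    _ ≤ ϱ / (1 - ϱ) ^ 2 * sin x := by gcongr; exact sum_odd_mul_pow_le hϱ0.le hϱ1 _
    _ ≤ 2 * ϱ / (1 - ϱ) ^ 2 * sin x := by gcongr; linarith

theorem trig_sum_bound (N : ℕ) (hN : 0 < N) (ϱ : ℝ) (hϱ0 : 0 < ϱ) (hϱ1 : ϱ < 1)
    (x : ℝ) (hx : x = Real.pi / (2 * N)) :
    ∑ k ∈ Finset.Icc 1 N, ϱ ^ (2 * k - 1) * Real.sin ((2 * (k : ℝ) - 1) * x) ≤
      (2 * ϱ / (1 - ϱ) ^ 2) * Real.sin x :=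
  trig_sum_bound_general N ϱ hϱ0 hϱ1 x hx
end

section
/- Let N, m be positive integers and set ϱ = exp(−m/(2√5 N)) and x = π/(2N). Then 2ϱ sin x / (1−ϱ)² ≤ 80π N m^{−2} exp(−m/(6√5 N)). -/
/-!
With `t = m / (4√5 N)` one has `ϱ = e^{-2t}`, `2ϱ / (1 - ϱ)² = 1 / (2 sinh² t)` and `m² = 80 N² t²`.
After `sin x ≤ x` the claim reduces to `t e^{t/3} ≤ 2 sinh t` for `t ≥ 0`. The paper obtains this
from Lazarević's inequality `cosh t ≤ (sinh t / t)³` and `cosh t ≥ e^t / 2`; it also follows directly from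
`t ≤ 3 (u - 1)` and a polynomial inequality in `u = e^{t/3} ≥ 1`.
-/

open Real

lemma mul_exp_div_three_le_two_mul_sinh {t : ℝ} (ht : 0 ≤ t) :
    t * exp (t / 3) ≤ 2 * sinh t := by
  set u := exp (t / 3) with hu
  have hu1 : 0 ≤ u - 1 := sub_nonneg.2 (one_le_exp (by positivity))
  have ht_le : t ≤ 3 * (u - 1) := by linarith [add_one_le_exp (t / 3)]
  have hsinh : 2 * sinh t = (u ^ 6 - 1) / u ^ 3 := by
    have hexp : exp t = u ^ 3 := by rw [hu, ← exp_nat_mul]; ring_nf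
    rw [sinh_eq, exp_neg, hexp]
    field_simp
  have hpoly : 0 ≤ u ^ 6 - 1 - 3 * (u - 1) * u ^ 4 := by
    rw [show u ^ 6 - 1 - 3 * (u - 1) * u ^ 4
        = (u - 1) * (u ^ 3 * (u - 1) ^ 2 + u ^ 2 + u + 1) by ring]
    positivity
  rw [hsinh, le_div_iff₀ (by positivity)]
  calc t * u * u ^ 3 = t * u ^ 4 := by ring
    _ ≤ 3 * (u - 1) * u ^ 4 := by gcongr
    _ ≤ u ^ 6 - 1 := by linarith

lemma one_div_two_mul_sinh_sq_le {t : ℝ} (ht : 0 < t) :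
    1 / (2 * sinh t ^ 2) ≤ 2 * exp (-(2 * t / 3)) / t ^ 2 := by
  have hsinh : 0 < sinh t := sinh_pos_iff.2 ht
  have he : exp (t / 3) ^ 2 * exp (-(2 * t / 3)) = 1 := by
    rw [← exp_nat_mul, ← exp_add]; ring_nf; exact exp_zero
  rw [div_le_div_iff₀ (by positivity) (by positivity)]
  calc 1 * t ^ 2 = (t * exp (t / 3)) ^ 2 * exp (-(2 * t / 3)) := by
        rw [mul_pow, mul_assoc, he]; ring
    _ ≤ (2 * sinh t) ^ 2 * exp (-(2 * t / 3)) := by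
        gcongr ?_ ^ 2 * _; exact mul_exp_div_three_le_two_mul_sinh ht.le
    _ = 2 * exp (-(2 * t / 3)) * (2 * sinh t ^ 2) := by ring

lemma two_mul_exp_div_one_sub_sq {t : ℝ} (ht : t ≠ 0) :
    2 * exp (-(2 * t)) / (1 - exp (-(2 * t))) ^ 2 = 1 / (2 * sinh t ^ 2) := by
  have hs : sinh t ≠ 0 := sinh_ne_zero.2 ht
  have h : 1 - exp (-(2 * t)) = 2 * exp (-t) * sinh t := by
    rw [sinh_eq]
    field_simp
    rw [mul_sub, ← exp_add, ← exp_add, neg_add_cancel, exp_zero]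
    ring_nf
  rw [h, show -(2 * t) = -t + -t by ring, exp_add]
  field_simp

theorem decay_bound (N m : ℕ) (hN : 0 < N) (hm : 0 < m)
    (ϱ x : ℝ) (hϱ : ϱ = Real.exp (-(m : ℝ) / (2 * Real.sqrt 5 * N)))
    (hx : x = Real.pi / (2 * N)) :
    2 * ϱ * Real.sin x / (1 - ϱ) ^ 2 ≤
      80 * Real.pi * N / (m : ℝ) ^ 2 * Real.exp (-(m : ℝ) / (6 * Real.sqrt 5 * N)) := by
  have hN' : (0 : ℝ) < N := by exact_mod_cast hN
  set t : ℝ := m / (4 * sqrt 5 * N) with ht_def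
  have ht : 0 < t := by positivity
  have hm_sq : (m : ℝ) ^ 2 = 80 * N ^ 2 * t ^ 2 := by
    rw [ht_def, div_pow]; field_simp; rw [sq_sqrt (by norm_num)]; ring
  have hϱ_t : ϱ = exp (-(2 * t)) := by rw [hϱ, ht_def]; congr 1; field_simp; ring
  have hexp_t : exp (-(m : ℝ) / (6 * sqrt 5 * N)) = exp (-(2 * t / 3)) := by
    rw [ht_def]; congr 1; field_simp; ring
  calc 2 * ϱ * sin x / (1 - ϱ) ^ 2 = sin x * (2 * ϱ / (1 - ϱ) ^ 2) := by ring
    _ = sin x * (1 / (2 * sinh t ^ 2)) := by rw [hϱ_t, two_mul_exp_div_one_sub_sq ht.ne']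
    _ ≤ x * (2 * exp (-(2 * t / 3)) / t ^ 2) := by
        have hx0 : 0 ≤ x := by rw [hx]; positivity
        exact mul_le_mul (sin_le hx0) (one_div_two_mul_sinh_sq_le ht) (by positivity) hx0
    _ = _ := by rw [hx, hm_sq, hexp_t]; field_simp
end
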